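/- Uniqueness of the filter map (Proposition on comonoid actions, in PartFn): suppose attr : M → D and let γ(m) = (m, attr(m)). If ψ : M × D ⇀ M is any partial function satisfying the Frobenius-action law (γ × id);(id × μ) = ψ;γ and the special-action law γ;ψ = id_M, then ψ equals the canonical filter φ, i.e., ψ(m,d) = m when attr(m) = d and ψ(m,d) is undefined otherwise. -/
import Mathlib


open Classical

/-- Equality-filter partial multiplication on `D`. -/
noncomputable def pMu {D : Type*} : D × D → Option D :=
  fun p => if p.1 = p.2 then some p.1 else none

/-- Attribute retrieval γ. -/
def pGamma {M D : Type*} (attr : M → D) : M → M × D := fun m => (m, attr m)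

/-- Uniqueness of the filter map: any ψ satisfying the Frobenius-action law
(γ × id);(id × μ) = ψ;γ and the special-action law γ;ψ = id must be the
canonical filter φ. -/
theorem partfn_filter_unique {M D : Type*} (attr : M → D)
    (ψ : M × D → Option M)
    (hFrob : ∀ (m : M) (d : D),
      (pMu (attr m, d)).map (fun x => (m, x)) = (ψ (m, d)).map (pGamma attr))
    (hSpec : ∀ m : M, ψ (m, attr m) = some m) :
    ∀ (m : M) (d : D), ψ (m, d) = if attr m = d then some m else none := by
  intro m d
  by_cases h : attr m = d
  · subst h; simpa using hSpec m
  · have := hFrob m d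
    simp [pMu, h] at this ⊢
    cases hψ : ψ (m, d) with
    | none => rfl
    | some x => rw [hψ] at this; simp at this
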